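/- Let L be a complex Leibniz superalgebra of nilindex n+m with characteristic sequence C(L) = (n | m₁, …, m_k), equipped with a basis {x₁,…,x_n,y₁,…,y_m} (x_i ∈ L₀, y_j ∈ L₁) satisfying [x_i,x₁]=x_{i+1} for 1 ≤ i ≤ n−1, [y_j,x₁]=y_{j+1} for j ∉ {m₁, m₁+m₂, …, m₁+⋯+m_k}, and [y_j,x₁]=0 for j ∈ {m₁, m₁+m₂, …, m₁+⋯+m_k}, whose generators are x₁ ∈ L₀ and y₁ ∈ L₁, and write [y_j,y₁] = Σ_{s=2}^n β_{j,s} x_s for 1 ≤ j ≤ m. Then for all 1 ≤ i,j ≤ m₁ one has [y_i,y_j] = Σ_{s=0}^{min{i+j−1,m₁}−i} (−1)^s C(j−1,s) Σ_{t=2}^{n−j+s+1} β_{i+s,t} x_{t+j−s−1}, where C(j−1,s) denotes the binomial coefficient. -/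

import Mathlib

/-- A complex Leibniz superalgebra: a ℤ₂-graded complex vector space `L = L₀ ⊕ L₁`
with a bilinear bracket satisfying `[L_α, L_β] ⊆ L_{α+β}` and the Leibniz
superidentity `[x,[y,z]] = [[x,y],z] − (−1)^{αβ}[[x,z],y]` for homogeneous `y, z`. -/
structure LeibnizSuper (L : Type*) [AddCommGroup L] [Module ℂ L] where
  bracket : L →ₗ[ℂ] L →ₗ[ℂ] L
  L0 : Submodule ℂ L
  L1 : Submodule ℂ L
  compl : IsCompl L0 L1
  g00 : ∀ y ∈ L0, ∀ z ∈ L0, bracket y z ∈ L0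
  g01 : ∀ y ∈ L0, ∀ z ∈ L1, bracket y z ∈ L1
  g10 : ∀ y ∈ L1, ∀ z ∈ L0, bracket y z ∈ L1
  g11 : ∀ y ∈ L1, ∀ z ∈ L1, bracket y z ∈ L0
  leib00 : ∀ x : L, ∀ y ∈ L0, ∀ z ∈ L0,
    bracket x (bracket y z) = bracket (bracket x y) z - bracket (bracket x z) y
  leib01 : ∀ x : L, ∀ y ∈ L0, ∀ z ∈ L1,
    bracket x (bracket y z) = bracket (bracket x y) z - bracket (bracket x z) y
  leib10 : ∀ x : L, ∀ y ∈ L1, ∀ z ∈ L0,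
    bracket x (bracket y z) = bracket (bracket x y) z - bracket (bracket x z) y
  leib11 : ∀ x : L, ∀ y ∈ L1, ∀ z ∈ L1,
    bracket x (bracket y z) = bracket (bracket x y) z + bracket (bracket x z) y

/-- `HasJordanType f ls` : the nilpotent endomorphism `f` has Jordan blocks of sizes
given by the decreasing list `ls` (the number of blocks of size `≥ j+1` equals
`rank f^j − rank f^{j+1}`). -/
def HasJordanType {V : Type*} [AddCommGroup V] [Module ℂ V] (f : Module.End ℂ V)
    (ls : List ℕ) : Prop :=
  ls.Pairwise (· ≥ ·) ∧ (∀ a ∈ ls, 0 < a) ∧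
  ∀ j : ℕ, ls.countP (fun a => decide (j + 1 ≤ a)) =
    Module.finrank ℂ (LinearMap.range (f ^ j)) -
      Module.finrank ℂ (LinearMap.range (f ^ (j + 1)))

namespace LeibnizSuper

variable {L : Type*} [AddCommGroup L] [Module ℂ L] (S : LeibnizSuper L)

/-- The span of all brackets `[a,b]`, `a ∈ p`, `b ∈ q`. -/
def bracketSpan (p q : Submodule ℂ L) : Submodule ℂ L :=
  Submodule.span ℂ {z | ∃ a ∈ p, ∃ b ∈ q, z = S.bracket a b}

/-- Descending central series; `S.term k` is `L^{k+1}` (so `S.term 0 = L¹ = L`). -/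
def term : ℕ → Submodule ℂ L
  | 0 => ⊤
  | k + 1 => S.bracketSpan (term k) ⊤

/-- `S.HasNilindex s` : `s` is the minimal natural number with `L^s = 0`. -/
def HasNilindex (s : ℕ) : Prop :=
  0 < s ∧ S.term (s - 1) = ⊥ ∧ ∀ t : ℕ, t + 1 < s → S.term t ≠ ⊥

/-- The superalgebra is nilpotent. -/
def IsNilpotentSuper : Prop := ∃ s, S.term s = ⊥

/-- Right multiplication operator `R_x z = [z, x]`. -/
def R (x : L) : Module.End ℂ L := S.bracket.flip x

/-- Restriction of `R_x` (for `x ∈ L₀`) to the even part `L₀`. -/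
def R0 (x : L) (hx : x ∈ S.L0) : Module.End ℂ S.L0 :=
  (S.R x).restrict (fun z hz => S.g00 z hz x hx)

/-- Restriction of `R_x` (for `x ∈ L₀`) to the odd part `L₁`. -/
def R1 (x : L) (hx : x ∈ S.L0) : Module.End ℂ S.L1 :=
  (S.R x).restrict (fun z hz => S.g10 z hz x hx)

/-- `S.HasCharSeq ns ms` : the characteristic sequence of `S` is `(ns | ms)`, i.e.
`ns` (resp. `ms`) is the lexicographically maximal sequence of Jordan block sizes of
`R_x` restricted to `L₀` (resp. `L₁`) over all `x ∈ L₀ ∖ [L₀, L₀]`. -/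
def HasCharSeq (ns ms : List ℕ) : Prop :=
  (∃ x, ∃ hx : x ∈ S.L0, x ∉ S.bracketSpan S.L0 S.L0 ∧ HasJordanType (S.R0 x hx) ns) ∧
  (∀ x, ∀ hx : x ∈ S.L0, x ∉ S.bracketSpan S.L0 S.L0 →
    ∀ ls, HasJordanType (S.R0 x hx) ls → ls = ns ∨ List.Lex (· < ·) ls ns) ∧
  (∃ x, ∃ hx : x ∈ S.L0, x ∉ S.bracketSpan S.L0 S.L0 ∧ HasJordanType (S.R1 x hx) ms) ∧
  (∀ x, ∀ hx : x ∈ S.L0, x ∉ S.bracketSpan S.L0 S.L0 →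
    ∀ ls, HasJordanType (S.R1 x hx) ls → ls = ms ∨ List.Lex (· < ·) ls ms)

/-- `S ∈ ZF^{n,m}` : `S` is zero-filiform with `dim L₀ = n`, `dim L₁ = m`. -/
def ZeroFiliform (n m : ℕ) : Prop :=
  Module.finrank ℂ S.L0 = n ∧ Module.finrank ℂ S.L1 = m ∧ S.HasCharSeq [n] [m]

/-- A graded subalgebra: a submodule closed under the bracket which is the sum of
its intersections with the even and the odd parts. -/
def IsGradedSubalgebra (p : Submodule ℂ L) : Prop :=
  (∀ a ∈ p, ∀ b ∈ p, S.bracket a b ∈ p) ∧ p = p ⊓ S.L0 ⊔ p ⊓ S.L1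

/-- `A` generates the superalgebra: the smallest graded subalgebra containing `A` is `L`. -/
def Generates (A : Set L) : Prop :=
  ∀ p : Submodule ℂ L, S.IsGradedSubalgebra p → A ⊆ p → p = ⊤

/-- An adapted basis `{x₁,…,x_n, y₁,…,y_m}` of a zero-filiform Leibniz superalgebra
(1-based indexing). -/
def IsAdaptedPair (n m : ℕ) (x y : ℕ → L) : Prop :=
  (∀ i, 1 ≤ i → i ≤ n → x i ∈ S.L0) ∧
  (∀ j, 1 ≤ j → j ≤ m → y j ∈ S.L1) ∧
  LinearIndependent ℂ
    (Sum.elim (fun i : Fin n => x ((i : ℕ) + 1)) (fun j : Fin m => y ((j : ℕ) + 1))) ∧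
  Submodule.span ℂ (Set.range
    (Sum.elim (fun i : Fin n => x ((i : ℕ) + 1)) (fun j : Fin m => y ((j : ℕ) + 1)))) = ⊤ ∧
  (∀ i, 1 ≤ i → i ≤ n - 1 → S.bracket (x i) (x 1) = x (i + 1)) ∧
  S.bracket (x n) (x 1) = 0 ∧
  (∀ i k, 1 ≤ i → i ≤ n → 2 ≤ k → k ≤ n → S.bracket (x i) (x k) = 0) ∧
  (∀ j, 1 ≤ j → j ≤ m - 1 → S.bracket (y j) (x 1) = y (j + 1)) ∧
  S.bracket (y m) (x 1) = 0 ∧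
  (∀ j k, 1 ≤ j → j ≤ m → 2 ≤ k → k ≤ n → S.bracket (y j) (x k) = 0)

end LeibnizSuper

/-!
For even `x` the Leibniz superidentity says that `R_x` is a derivation of the bracket, so
`[a, R_x b] = R_x [a, b] - [R_x a, b]`, and inductively
`[a, R_x^k b] = ∑ₛ (-1)^s C(k, s) R_x^(k-s) [R_x^s a, b]`.
Take `x = x₁`, `a = y_i`, `b = y₁`: then `y_j = R^(j-1) y₁`, and `R^s y_i = y_{i+s}` until `i + s`
leaves the first block `1, …, m₁`, after which it vanishes. Finally `R^d` sends
`∑ₜ β_t x_t` to `∑ₜ β_t x_{t+d}`; the terms pushed past `x_n` die because `[x_n, x₁] = 0`,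
which holds since `R_{x₁}` is nilpotent on the `n`-dimensional space `L₀`.
-/

open Finset Module

theorem List.headI_le_sum_take (ms : List ℕ) (k : ℕ) : ms.headI ≤ (ms.take (k + 1)).sum := by
  cases ms <;> simp

theorem List.sum_take_one (ms : List ℕ) : (ms.take 1).sum = ms.headI := by
  cases ms <;> simp

namespace Module.End

variable {R M : Type*} [Semiring R] [AddCommMonoid M] [Module R M] {f : End R M} {v : ℕ → M}
  {m : ℕ}

theorem pow_apply_eq_of_shift (hv : ∀ r, 1 ≤ r → r ≤ m - 1 → f (v r) = v (r + 1)) {i : ℕ}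
    (hi : 1 ≤ i) : ∀ s, i + s ≤ m → (f ^ s) (v i) = v (i + s)
  | 0, _ => by simp
  | s + 1, h => by
    rw [pow_succ', mul_apply, pow_apply_eq_of_shift hv hi s (by omega), hv _ (by omega) (by omega),
      add_assoc]

theorem pow_apply_eq_zero_of_shift (hv : ∀ r, 1 ≤ r → r ≤ m - 1 → f (v r) = v (r + 1))
    (htop : f (v m) = 0) {i s : ℕ} (hi : 1 ≤ i) (him : i ≤ m) (hs : m < i + s) :
    (f ^ s) (v i) = 0 := by
  obtain ⟨k, rfl⟩ : ∃ k, s = k + (m - i + 1) := ⟨s - (m - i + 1), by omega⟩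
  rw [pow_add, mul_apply, pow_succ', mul_apply, pow_apply_eq_of_shift hv hi _ (by omega),
    Nat.add_sub_cancel' him, htop, map_zero]

theorem pow_apply_sum_Icc_of_shift {a : ℕ} (ha : 1 ≤ a)
    (hv : ∀ r, 1 ≤ r → r ≤ m - 1 → f (v r) = v (r + 1)) (htop : a ≤ m → f (v m) = 0)
    (c : ℕ → R) (d : ℕ) :
    (f ^ d) (∑ t ∈ Icc a m, c t • v t) = ∑ t ∈ Icc a (m - d), c t • v (t + d) := by
  induction d with
  | zero => simp
  | succ d ih =>
    rw [pow_succ', mul_apply, ih, map_sum]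
    simp only [map_smul]
    rcases lt_or_ge (m - d) a with h | h
    · rw [Icc_eq_empty (by omega), Icc_eq_empty (by omega), sum_empty, sum_empty]
    obtain ⟨k, hk⟩ : ∃ k, m - d = k + 1 := ⟨m - d - 1, by omega⟩
    rw [hk, sum_Icc_succ_top (by omega), show k + 1 + d = m by omega, htop (by omega), smul_zero,
      add_zero, show m - (d + 1) = k by omega]
    refine sum_congr rfl fun t ht => ?_
    rw [mem_Icc] at ht
    rw [hv _ (by omega) (by omega), add_assoc]

end Module.End

namespace LeibnizSuper

variable {L : Type*} [AddCommGroup L] [Module ℂ L] (S : LeibnizSuper L)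

theorem HasCharSeq.pos_of_mem_left {S : LeibnizSuper L} {ns ms : List ℕ}
    (h : S.HasCharSeq ns ms) {a : ℕ} (ha : a ∈ ns) : 0 < a := by
  obtain ⟨_, _, _, -, hpos, -⟩ := h.1
  exact hpos a ha

@[simp]
theorem R_apply (x z : L) : S.R x z = S.bracket z x := rfl

theorem R_bracket {x : L} (hx : x ∈ S.L0) (a b : L) :
    S.R x (S.bracket a b) = S.bracket (S.R x a) b + S.bracket a (S.R x b) := by
  have hb : b ∈ S.L0 ⊔ S.L1 := S.compl.sup_eq_top ▸ Submodule.mem_top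
  obtain ⟨b₀, hb₀, b₁, hb₁, rfl⟩ := Submodule.mem_sup.mp hb
  simp only [R_apply, map_add, S.leib00 a b₀ hb₀ x hx, S.leib10 a b₁ hb₁ x hx]
  abel

theorem bracket_pow_R {x : L} (hx : x ∈ S.L0) (j : ℕ) (a b : L) :
    S.bracket a ((S.R x ^ j) b) = ∑ pq ∈ antidiagonal j,
      j.choose pq.1 • (-1 : ℂ) ^ pq.1 • (S.R x ^ pq.2) (S.bracket ((S.R x ^ pq.1) a) b) := by
  induction j generalizing a with
  | zero => simp
  | succ j ih =>
    rw [sum_antidiagonal_choose_succ_nsmul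
      (fun p q => (-1 : ℂ) ^ p • (S.R x ^ q) (S.bracket ((S.R x ^ p) a) b)) j]
    have hder : ∀ a c, S.bracket a (S.R x c) = S.R x (S.bracket a c) - S.bracket (S.R x a) c :=
      fun a c => by rw [S.R_bracket hx]; abel
    rw [pow_succ', Module.End.mul_apply, hder, ih a, ih (S.R x a), map_sum, sub_eq_add_neg,
      ← sum_neg_distrib]
    congr 1
    · refine sum_congr rfl fun pq _ => ?_
      rw [map_nsmul, map_smul, pow_succ' _ pq.2, Module.End.mul_apply]
    · refine sum_congr rfl fun pq hpq => ?_
      rw [Nat.choose_symm_of_eq_add (mem_antidiagonal.1 hpq).symm, pow_succ (S.R x),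
        Module.End.mul_apply, pow_succ, mul_neg_one, neg_smul, smul_neg]

theorem pow_R_apply_mem_term (w z : L) (k : ℕ) : (S.R w ^ k) z ∈ S.term k := by
  induction k with
  | zero => exact Submodule.mem_top
  | succ k ih =>
    rw [pow_succ', Module.End.mul_apply]
    exact Submodule.subset_span ⟨_, ih, w, Submodule.mem_top, rfl⟩

theorem coe_pow_R0_apply {x : L} (hx : x ∈ S.L0) (k : ℕ) (z : S.L0) :
    ((S.R0 x hx ^ k) z : L) = (S.R x ^ k) z := by
  induction k with
  | zero => rfl
  | succ k ih => rw [pow_succ', Module.End.mul_apply, pow_succ', Module.End.mul_apply, ← ih]; rfl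

theorem pow_R_finrank_apply_eq_zero [Module.Finite ℂ S.L0] {N : ℕ} (hN : S.term N = ⊥)
    {x z : L} (hx : x ∈ S.L0) (hz : z ∈ S.L0) : (S.R x ^ finrank ℂ S.L0) z = 0 := by
  have hker : (⟨z, hz⟩ : S.L0) ∈ LinearMap.ker (S.R0 x hx ^ N) := by
    rw [LinearMap.mem_ker, ← Subtype.coe_inj, coe_pow_R0_apply]
    simpa [hN] using S.pow_R_apply_mem_term x z N
  have hfin := Module.End.ker_pow_le_ker_pow_finrank _ N hker
  rwa [LinearMap.mem_ker, ← Subtype.coe_inj, coe_pow_R0_apply] at hfin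

theorem bracket_top_eq_zero_of_shift {N n : ℕ} (hN : S.term N = ⊥)
    (hn : finrank ℂ S.L0 = n) (hn0 : 0 < n) {x : ℕ → L} (hx1 : x 1 ∈ S.L0)
    (hx : ∀ i, 1 ≤ i → i ≤ n - 1 → S.bracket (x i) (x 1) = x (i + 1)) :
    S.bracket (x n) (x 1) = 0 := by
  have : Module.Finite ℂ S.L0 := Module.finite_of_finrank_pos (hn ▸ hn0)
  obtain ⟨k, rfl⟩ : ∃ k, n = k + 1 := ⟨n - 1, by omega⟩
  have hchain : (S.R (x 1) ^ k) (x 1) = x (k + 1) := by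
    rw [Module.End.pow_apply_eq_of_shift hx le_rfl k (by omega), add_comm]
  rw [← hchain, ← R_apply, ← Module.End.mul_apply, ← pow_succ', ← hn]
  exact S.pow_R_finrank_apply_eq_zero hN hx1 hx1

theorem bracket_eq_sum_of_shift {x : L} (hx : x ∈ S.L0) {y : ℕ → L} {m : ℕ}
    (hy : ∀ r, 1 ≤ r → r ≤ m - 1 → S.R x (y r) = y (r + 1)) (htop : S.R x (y m) = 0)
    {i j : ℕ} (hi : 1 ≤ i) (him : i ≤ m) (hj : 1 ≤ j) (hjm : j ≤ m) :
    S.bracket (y i) (y j) = ∑ s ∈ range (min (i + j - 1) m - i + 1),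
      ((-1 : ℂ) ^ s * (j - 1).choose s) • (S.R x ^ (j - 1 - s)) (S.bracket (y (i + s)) (y 1)) := by
  obtain ⟨k, rfl⟩ : ∃ k, j = k + 1 := ⟨j - 1, by omega⟩
  have hyj : y (k + 1) = (S.R x ^ k) (y 1) := by
    rw [Module.End.pow_apply_eq_of_shift hy le_rfl k (by omega), add_comm]
  rw [hyj, S.bracket_pow_R hx, Nat.sum_antidiagonal_eq_sum_range_succ_mk, Nat.add_sub_cancel,
    ← sum_subset (range_subset_range.2 (by omega : min (i + (k + 1) - 1) m - i + 1 ≤ k + 1))]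
  · refine sum_congr rfl fun s hs => ?_
    rw [mem_range] at hs
    rw [Module.End.pow_apply_eq_of_shift hy hi s (by omega), ← Nat.cast_smul_eq_nsmul ℂ, smul_smul,
      mul_comm]
  · intro s hs hs'
    rw [mem_range] at hs hs'
    rw [Module.End.pow_apply_eq_zero_of_shift hy htop hi him (by omega), map_zero,
      LinearMap.zero_apply, map_zero, smul_zero, smul_zero]

end LeibnizSuper

open LeibnizSuper in
theorem bracket_yy_formula_general_general {L : Type*} [AddCommGroup L] [Module ℂ L]
    (S : LeibnizSuper L) (n : ℕ) (ms : List ℕ)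
    (hn : Module.finrank ℂ S.L0 = n)
    (hcs : S.HasCharSeq [n] ms) (hnil : S.HasNilindex (n + ms.sum))
    (x y : ℕ → L)
    (hx0 : ∀ i, 1 ≤ i → i ≤ n → x i ∈ S.L0)
    (hxx : ∀ i, 1 ≤ i → i ≤ n - 1 → S.bracket (x i) (x 1) = x (i + 1))
    (hyx : ∀ j, 1 ≤ j → j ≤ ms.sum →
      (¬ ∃ k < ms.length, j = (ms.take (k + 1)).sum) →
      S.bracket (y j) (x 1) = y (j + 1))
    (hyx0 : ∀ j, (∃ k < ms.length, j = (ms.take (k + 1)).sum) →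
      S.bracket (y j) (x 1) = 0)
    (β : ℕ → ℕ → ℂ)
    (hβ : ∀ j, 1 ≤ j → j ≤ ms.sum →
      S.bracket (y j) (y 1) = ∑ s ∈ Finset.Icc 2 n, β j s • x s) :
    ∀ i j, 1 ≤ i → i ≤ ms.headI → 1 ≤ j → j ≤ ms.headI →
      S.bracket (y i) (y j) =
        ∑ s ∈ Finset.range (min (i + j - 1) ms.headI - i + 1),
          ∑ t ∈ Finset.Icc 2 (n + s + 1 - j),
            ((-1 : ℂ) ^ s * (Nat.choose (j - 1) s : ℂ) * β (i + s) t) •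
              x (t + j - s - 1) := by
  intro i j hi him hj hjm
  have hn0 : 0 < n := hcs.pos_of_mem_left (List.mem_singleton_self n)
  have hx1 : x 1 ∈ S.L0 := hx0 1 le_rfl hn0
  have hms : 0 < ms.length := List.length_pos_iff.2 fun h => by simp [h] at him; omega
  have hystep : ∀ r, 1 ≤ r → r ≤ ms.headI - 1 → S.R (x 1) (y r) = y (r + 1) := by
    refine fun r hr hrm => hyx r hr (by have := ms.headI_le_sum; omega) ?_
    rintro ⟨k, -, hk⟩
    have := ms.headI_le_sum_take k
    omega
  have hytop : S.R (x 1) (y ms.headI) = 0 := hyx0 _ ⟨0, hms, (ms.sum_take_one).symm⟩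
  have hxtop : S.R (x 1) (x n) = 0 := S.bracket_top_eq_zero_of_shift hnil.2.1 hn hn0 hx1 hxx
  rw [S.bracket_eq_sum_of_shift hx1 hystep hytop hi him hj hjm]
  refine sum_congr rfl fun s hs => ?_
  rw [mem_range] at hs
  rw [hβ (i + s) (by omega) (by have := ms.headI_le_sum; omega),
    Module.End.pow_apply_sum_Icc_of_shift one_le_two hxx (fun _ => hxtop), smul_sum,
    show n - (j - 1 - s) = n + s + 1 - j by omega]
  refine sum_congr rfl fun t _ => ?_
  rw [smul_smul, show t + (j - 1 - s) = t + j - s - 1 by omega]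

open LeibnizSuper in
/-- Formula (6): in a Leibniz superalgebra of nilindex `n+m` with characteristic
sequence `(n | m₁, …, m_k)`, basis (5) and generators `x₁, y₁`, writing
`[y_j,y₁] = Σ_{s=2}^n β_{j,s} x_s`, for all `1 ≤ i, j ≤ m₁` one has
`[y_i,y_j] = Σ_{s=0}^{min(i+j−1,m₁)−i} (−1)^s C(j−1,s) Σ_{t=2}^{n−j+s+1} β_{i+s,t} x_{t+j−s−1}`. -/
theorem bracket_yy_formula_general {L : Type*} [AddCommGroup L] [Module ℂ L]
    [FiniteDimensional ℂ L] (S : LeibnizSuper L) (n : ℕ) (ms : List ℕ)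
    (hne : ms ≠ [])
    (hn : Module.finrank ℂ S.L0 = n) (hm : Module.finrank ℂ S.L1 = ms.sum)
    (hcs : S.HasCharSeq [n] ms) (hnil : S.HasNilindex (n + ms.sum))
    (x y : ℕ → L)
    (hx0 : ∀ i, 1 ≤ i → i ≤ n → x i ∈ S.L0)
    (hy1 : ∀ j, 1 ≤ j → j ≤ ms.sum → y j ∈ S.L1)
    (hLI : LinearIndependent ℂ (Sum.elim (fun i : Fin n => x ((i : ℕ) + 1))
      (fun j : Fin ms.sum => y ((j : ℕ) + 1))))
    (hspan : Submodule.span ℂ (Set.range (Sum.elim (fun i : Fin n => x ((i : ℕ) + 1))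
      (fun j : Fin ms.sum => y ((j : ℕ) + 1)))) = ⊤)
    (hxx : ∀ i, 1 ≤ i → i ≤ n - 1 → S.bracket (x i) (x 1) = x (i + 1))
    (hyx : ∀ j, 1 ≤ j → j ≤ ms.sum →
      (¬ ∃ k < ms.length, j = (ms.take (k + 1)).sum) →
      S.bracket (y j) (x 1) = y (j + 1))
    (hyx0 : ∀ j, (∃ k < ms.length, j = (ms.take (k + 1)).sum) →
      S.bracket (y j) (x 1) = 0)
    (hgen : S.Generates {x 1, y 1})
    (β : ℕ → ℕ → ℂ)
    (hβ : ∀ j, 1 ≤ j → j ≤ ms.sum →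
      S.bracket (y j) (y 1) = ∑ s ∈ Finset.Icc 2 n, β j s • x s) :
    ∀ i j, 1 ≤ i → i ≤ ms.headI → 1 ≤ j → j ≤ ms.headI →
      S.bracket (y i) (y j) =
        ∑ s ∈ Finset.range (min (i + j - 1) ms.headI - i + 1),
          ∑ t ∈ Finset.Icc 2 (n + s + 1 - j),
            ((-1 : ℂ) ^ s * (Nat.choose (j - 1) s : ℂ) * β (i + s) t) •
              x (t + j - s - 1) :=
  bracket_yy_formula_general_general S n ms hn hcs hnil x y hx0 hxx hyx hyx0 β hβ
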